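/- arXiv:1701.09074 — 2 statements merged into one kernel-verified Lean document; each statement's English description precedes it below -/
import Mathlib

section
/- Let A be an Iwanaga-Gorenstein finite-dimensional algebra. A finitely generated A-module G is Gorenstein projective if and only if there is an exact sequence 0 → G → P^0 → P^1 → ⋯ with each P^i finitely generated projective. -/
open CategoryTheory

/-- A totally acyclic complex of finitely generated projective `A`-modules:
an acyclic complex of finitely generated projectives which remains acyclic
after applying `Hom_A(-, A)`. -/
structure TotallyAcyclicComplex (A : Type) [Ring A] : Type 1 where
  P : ℤ → ModuleCat.{0} A
  fg : ∀ i, Module.Finite A (P i)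
  proj : ∀ i, Module.Projective A (P i)
  d : ∀ i : ℤ, P i ⟶ P (i + 1)
  acyclic : ∀ i : ℤ, LinearMap.range (d i).hom = LinearMap.ker (d (i + 1)).hom
  homAcyclic : ∀ (i : ℤ) (g : P (i + 1) →ₗ[A] A), g.comp (d i).hom = 0 →
      ∃ h : P (i + 1 + 1) →ₗ[A] A, h.comp (d (i + 1)).hom = g

/-- A module is Gorenstein projective if it is a kernel (syzygy) of a differential in a
totally acyclic complex of finitely generated projectives. -/
def IsGorensteinProjective (A : Type) [Ring A] (M : Type) [AddCommGroup M] [Module A M] :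
    Prop :=
  ∃ (C : TotallyAcyclicComplex A) (i : ℤ), Nonempty (M ≃ₗ[A] LinearMap.ker (C.d i).hom)

/-- `HasProjDimLE A n M` means that `M` has projective dimension at most `n`. -/
def HasProjDimLE (A : Type) [Ring A] : ℕ → ∀ (M : Type) [AddCommGroup M] [Module A M], Prop
  | 0 => fun M _ _ => Module.Projective A M
  | n + 1 => fun M _ _ => ∃ (P : Type) (_ : AddCommGroup P) (_ : Module A P),
      Module.Projective A P ∧ ∃ f : P →ₗ[A] M, Function.Surjective f ∧
        HasProjDimLE A n (LinearMap.ker f)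

/-- `HasInjDimLE A n M` means that `M` has injective dimension at most `n`. -/
def HasInjDimLE (A : Type) [Ring A] : ℕ → ∀ (M : Type) [AddCommGroup M] [Module A M], Prop
  | 0 => fun M _ _ => Module.Injective A M
  | n + 1 => fun M _ _ => ∃ (I : Type) (_ : AddCommGroup I) (_ : Module A I),
      Module.Injective A I ∧ ∃ f : M →ₗ[A] I, Function.Injective f ∧
        HasInjDimLE A n (I ⧸ LinearMap.range f)

/-- An algebra is Iwanaga-Gorenstein if it has finite self-injective dimension
on both sides (right modules being modules over `Aᵐᵒᵖ`). -/
def IwanagaGorenstein (A : Type) [Ring A] : Prop :=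
  (∃ n, HasInjDimLE A n A) ∧ (∃ n, HasInjDimLE Aᵐᵒᵖ n Aᵐᵒᵖ)

/-!
Cutting a totally acyclic complex at the degree of `G` gives the coresolution. Conversely, since
`A` is Noetherian, `G` has a resolution by finitely generated free modules; splicing it with the
coresolution yields an acyclic complex of finitely generated projectives whose kernel in degree
`0` is `G`. This complex is totally acyclic: by dimension shifting along injective
coresolutions, `Hom(-, N)` is exact on any acyclic complex of projectives as soon as `N` has
finite injective dimension, and `A` has finite injective dimension over itself.
-/

open LinearMap

section Factorization

variable {A : Type} [Ring A] {M M' N : Type} [AddCommGroup M] [Module A M]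
  [AddCommGroup M'] [Module A M'] [AddCommGroup N] [Module A N]

theorem Module.Injective.exists_comp_eq_of_ker_le [Module.Injective A N] (f : M →ₗ[A] M')
    (g : M →ₗ[A] N) (hfg : ker f ≤ ker g) : ∃ h : M' →ₗ[A] N, h ∘ₗ f = g := by
  obtain ⟨h, hh⟩ := Module.Injective.extension_property A N _ _ ((ker f).liftQ f le_rfl)
    (ker_eq_bot.1 (Submodule.ker_liftQ_eq_bot _ _ _ le_rfl)) ((ker f).liftQ g hfg)
  refine ⟨h, ?_⟩
  rw [← (ker f).liftQ_mkQ f le_rfl, ← comp_assoc, hh, Submodule.liftQ_mkQ]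

theorem LinearMap.exists_comp_eq_of_range_le (f : N →ₗ[A] M') (hf : Function.Injective f)
    (u : M →ₗ[A] M') (hu : range u ≤ range f) : ∃ v : M →ₗ[A] N, f ∘ₗ v = u :=
  ⟨(LinearEquiv.ofInjective f hf).symm ∘ₗ u.codRestrict _ fun x => hu ⟨x, rfl⟩, by
    ext x
    simp⟩

end Factorization

section HomExactness

variable {A : Type} [Ring A] {P : ℤ → ModuleCat.{0} A} {d : ∀ i : ℤ, P i →ₗ[A] P (i + 1)}

theorem exists_comp_eq_of_acyclic_of_injective (hac : ∀ i, range (d i) = ker (d (i + 1)))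
    {N : Type} [AddCommGroup N] [Module A N] [Module.Injective A N] (i : ℤ)
    (g : P (i + 1) →ₗ[A] N) (hg : g ∘ₗ d i = 0) : ∃ h : P (i + 1 + 1) →ₗ[A] N, h ∘ₗ d (i + 1) = g :=
  Module.Injective.exists_comp_eq_of_ker_le _ _ (by rw [← hac i, range_le_ker_iff]; exact hg)

/-- Dimension shifting along `0 → N → I → I ⧸ N → 0`: exactness of `Hom(-, I ⧸ N)` one degree
higher gives exactness of `Hom(-, N)`. -/
theorem exists_comp_eq_of_acyclic_of_injective_quotient (hproj : ∀ i, Module.Projective A (P i))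
    (hac : ∀ i, range (d i) = ker (d (i + 1))) {N I : Type} [AddCommGroup N] [Module A N]
    [AddCommGroup I] [Module A I] [Module.Injective A I] (f : N →ₗ[A] I)
    (hf : Function.Injective f) (i : ℤ)
    (hQ : ∀ g : P (i + 1 + 1) →ₗ[A] I ⧸ range f, g ∘ₗ d (i + 1) = 0 →
      ∃ h : P (i + 1 + 1 + 1) →ₗ[A] I ⧸ range f, h ∘ₗ d (i + 1 + 1) = g)
    (g : P (i + 1) →ₗ[A] N) (hg : g ∘ₗ d i = 0) :
    ∃ h : P (i + 1 + 1) →ₗ[A] N, h ∘ₗ d (i + 1) = g := by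
  have hdd : d (i + 1 + 1) ∘ₗ d (i + 1) = 0 := range_le_ker_iff.1 (hac (i + 1)).le
  obtain ⟨h₁, hh₁⟩ := exists_comp_eq_of_acyclic_of_injective hac i (f ∘ₗ g)
    (by rw [comp_assoc, hg, comp_zero])
  obtain ⟨h₂, hh₂⟩ := hQ ((range f).mkQ ∘ₗ h₁)
    (by rw [comp_assoc, hh₁, ← comp_assoc, range_mkQ_comp, zero_comp])
  obtain ⟨h₃, hh₃⟩ := Module.projective_lifting_property _ h₂ (range f).mkQ_surjective
  -- correcting `h₁` by `h₃ ∘ d` makes it land in `N`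
  obtain ⟨h, hh⟩ := exists_comp_eq_of_range_le f hf (h₁ - h₃ ∘ₗ d (i + 1 + 1)) (by
    rw [← Submodule.ker_mkQ (range f), range_le_ker_iff, comp_sub, ← comp_assoc, hh₃, hh₂,
      sub_self])
  have hfh : f ∘ₗ (h ∘ₗ d (i + 1)) = f ∘ₗ g := by
    rw [← comp_assoc, hh, sub_comp, comp_assoc, hdd, comp_zero, sub_zero, hh₁]
  exact ⟨h, LinearMap.ext fun x => hf (LinearMap.congr_fun hfh x)⟩

theorem exists_comp_eq_of_acyclic_of_hasInjDimLE (hproj : ∀ i, Module.Projective A (P i))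
    (hac : ∀ i, range (d i) = ker (d (i + 1))) (n : ℕ) (N : Type) [AddCommGroup N] [Module A N]
    (hN : HasInjDimLE A n N) (i : ℤ) (g : P (i + 1) →ₗ[A] N) (hg : g ∘ₗ d i = 0) :
    ∃ h : P (i + 1 + 1) →ₗ[A] N, h ∘ₗ d (i + 1) = g := by
  induction n generalizing N i with
  | zero =>
    have : Module.Injective A N := hN
    exact exists_comp_eq_of_acyclic_of_injective hac i g hg
  | succ n ih =>
    obtain ⟨I, _, _, hI, f, hf, hQ⟩ := hN
    exact exists_comp_eq_of_acyclic_of_injective_quotient hproj hac f hf i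
      (ih _ hQ (i + 1)) g hg

end HomExactness

def TotallyAcyclicComplex.ofAcyclic {A : Type} [Ring A] {n : ℕ} (hA : HasInjDimLE A n A)
    (P : ℤ → ModuleCat.{0} A) (fg : ∀ i, Module.Finite A (P i))
    (proj : ∀ i, Module.Projective A (P i)) (d : ∀ i : ℤ, P i ⟶ P (i + 1))
    (acyclic : ∀ i : ℤ, range (d i).hom = ker (d (i + 1)).hom) : TotallyAcyclicComplex A where
  P := P
  fg := fg
  proj := proj
  d := d
  acyclic := acyclic
  homAcyclic := exists_comp_eq_of_acyclic_of_hasInjDimLE (d := fun i => (d i).hom) proj acyclic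
    n A hA

def HasFGProjCoresolution (A : Type) [Ring A] (G : Type) [AddCommGroup G] [Module A G] : Prop :=
  ∃ (P : ℕ → ModuleCat.{0} A) (_ : ∀ n, Module.Finite A (P n))
    (_ : ∀ n, Module.Projective A (P n))
    (d : ∀ n : ℕ, P n ⟶ P (n + 1)) (ι : G →ₗ[A] P 0),
    Function.Injective ι ∧ range ι = ker (d 0).hom ∧ ∀ n, range (d n).hom = ker (d (n + 1)).hom

theorem HasFGProjCoresolution.of_linearEquiv {A : Type} [Ring A] {G G' : Type} [AddCommGroup G]
    [Module A G] [AddCommGroup G'] [Module A G'] (e : G ≃ₗ[A] G')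
    (h : HasFGProjCoresolution A G') : HasFGProjCoresolution A G := by
  obtain ⟨P, fg, proj, d, ι, hι, h0, hd⟩ := h
  refine ⟨P, fg, proj, d, ι ∘ₗ e.toLinearMap, hι.comp e.injective, ?_, hd⟩
  rw [range_comp, e.range, Submodule.map_top, h0]

section Reindex

variable {A : Type} [Ring A] {P : ℤ → ModuleCat.{0} A}

theorem map_eqToHom_ker (d : ∀ i : ℤ, P i ⟶ P (i + 1)) {a b : ℤ} (h : a = b) :
    (ker (d a).hom).map (eqToHom (congrArg P h)).hom = ker (d b).hom := by
  subst h
  simp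

theorem ker_eqToHom_comp {M : Type} [AddCommGroup M] [Module A M] {a b : ℤ} (h : a = b)
    (f : M →ₗ[A] P a) : ker ((eqToHom (congrArg P h)).hom ∘ₗ f) = ker f := by
  subst h
  simp

end Reindex

theorem TotallyAcyclicComplex.hasFGProjCoresolution_ker {A : Type} [Ring A]
    (C : TotallyAcyclicComplex A) (i : ℤ) : HasFGProjCoresolution A (ker (C.d i).hom) := by
  have hsucc (n : ℕ) : i + n + 1 = i + (n + 1 : ℕ) := by push_cast; ring
  have hzero : i = i + (0 : ℕ) := by simp
  refine ⟨fun n => C.P (i + n), fun n => C.fg _, fun n => C.proj _,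
    fun n => C.d (i + n) ≫ eqToHom (congrArg C.P (hsucc n)),
    (eqToHom (congrArg C.P hzero)).hom ∘ₗ (ker (C.d i).hom).subtype,
    ker_eq_bot.1 (by rw [ker_eqToHom_comp hzero, Submodule.ker_subtype]), ?_, fun n => ?_⟩
  · rw [ModuleCat.hom_comp, ker_eqToHom_comp (hsucc 0), range_comp, Submodule.range_subtype,
      map_eqToHom_ker C.d hzero]
  · rw [ModuleCat.hom_comp, ModuleCat.hom_comp, ker_eqToHom_comp (hsucc (n + 1)), range_comp,
      C.acyclic, map_eqToHom_ker C.d (hsucc n)]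

def HasFGProjResolution (A : Type) [Ring A] (G : Type) [AddCommGroup G] [Module A G] : Prop :=
  ∃ (F : ℕ → ModuleCat.{0} A) (_ : ∀ n, Module.Finite A (F n))
    (_ : ∀ n, Module.Projective A (F n))
    (δ : ∀ n : ℕ, F (n + 1) ⟶ F n) (ε : F 0 →ₗ[A] G),
    Function.Surjective ε ∧ range (δ 0).hom = ker ε ∧
      ∀ n, range (δ (n + 1)).hom = ker (δ n).hom

section Resolution

variable (A : Type) [Ring A]

noncomputable def finiteFreeCoverRank (M : Type) [AddCommGroup M] [Module A M]
    [Module.Finite A M] : ℕ :=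
  (Module.Finite.exists_fin' A M).choose

noncomputable def finiteFreeCover (M : Type) [AddCommGroup M] [Module A M] [Module.Finite A M] :
    (Fin (finiteFreeCoverRank A M) → A) →ₗ[A] M :=
  (Module.Finite.exists_fin' A M).choose_spec.choose

theorem finiteFreeCover_surjective (M : Type) [AddCommGroup M] [Module A M]
    [Module.Finite A M] : Function.Surjective (finiteFreeCover A M) :=
  (Module.Finite.exists_fin' A M).choose_spec.choose_spec

variable [IsNoetherian A A]

noncomputable def finiteSyzygy (M : FGModuleCat.{0} A) : ℕ → FGModuleCat.{0} A
  | 0 => M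
  | n + 1 => FGModuleCat.of A (ker (finiteFreeCover A (finiteSyzygy M n)))

noncomputable def finiteSyzygySubtype (M : FGModuleCat.{0} A) (n : ℕ) :
    finiteSyzygy A M (n + 1) →ₗ[A] Fin (finiteFreeCoverRank A (finiteSyzygy A M n)) → A :=
  (ker (finiteFreeCover A (finiteSyzygy A M n))).subtype

theorem range_finiteSyzygySubtype (M : FGModuleCat.{0} A) (n : ℕ) :
    range (finiteSyzygySubtype A M n) = ker (finiteFreeCover A (finiteSyzygy A M n)) :=
  Submodule.range_subtype _

theorem ker_finiteSyzygySubtype (M : FGModuleCat.{0} A) (n : ℕ) :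
    ker (finiteSyzygySubtype A M n) = ⊥ :=
  Submodule.ker_subtype _

theorem hasFGProjResolution (G : Type) [AddCommGroup G] [Module A G] [Module.Finite A G] :
    HasFGProjResolution A G := by
  let S := finiteSyzygy A (FGModuleCat.of A G)
  refine ⟨fun n => ModuleCat.of A (Fin (finiteFreeCoverRank A (S n)) → A),
    fun _ => inferInstance, fun _ => inferInstance,
    fun n => ModuleCat.ofHom (finiteSyzygySubtype A _ n ∘ₗ finiteFreeCover A (S (n + 1))),
    finiteFreeCover A G, finiteFreeCover_surjective A G, ?_, fun n => ?_⟩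
  all_goals
    simp only [ModuleCat.hom_ofHom]
    rw [range_comp, range_eq_top.2 (finiteFreeCover_surjective _ _), Submodule.map_top,
      range_finiteSyzygySubtype]
  · rfl
  · rw [ker_comp, ker_finiteSyzygySubtype, Submodule.comap_bot]

end Resolution

section Splice

variable {A : Type} [Ring A] {G : Type} [AddCommGroup G] [Module A G]

def spliceObj (F P : ℕ → ModuleCat.{0} A) : ℤ → ModuleCat.{0} A
  | .ofNat n => P n
  | .negSucc n => F n

variable {F P : ℕ → ModuleCat.{0} A} (δ : ∀ n : ℕ, F (n + 1) ⟶ F n) (ε : F 0 →ₗ[A] G)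
  (ι : G →ₗ[A] P 0) (d : ∀ n : ℕ, P n ⟶ P (n + 1))

/-- The complex `⋯ → F 1 → F 0 → P 0 → P 1 → ⋯`, with `F 0` in degree `-1` and the
differential `F 0 → P 0` the composite `ι ∘ ε` through `G`. -/
noncomputable def spliceHom : ∀ i : ℤ, spliceObj F P i ⟶ spliceObj F P (i + 1)
  | .ofNat n => d n
  | .negSucc 0 => ModuleCat.ofHom (ι ∘ₗ ε)
  | .negSucc (n + 1) => δ n

theorem spliceHom_acyclic (hε : Function.Surjective ε) (hδε : range (δ 0).hom = ker ε)
    (hδ : ∀ n, range (δ (n + 1)).hom = ker (δ n).hom) (hι : Function.Injective ι)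
    (hιd : range ι = ker (d 0).hom) (hd : ∀ n, range (d n).hom = ker (d (n + 1)).hom) :
    ∀ i : ℤ, range (spliceHom δ ε ι d i).hom = ker (spliceHom δ ε ι d (i + 1)).hom
  | .ofNat n => hd n
  | .negSucc 0 => by
    change range (ι ∘ₗ ε) = ker (d 0).hom
    rw [range_comp, range_eq_top.2 hε, Submodule.map_top, hιd]
  | .negSucc 1 => by
    change range (δ 0).hom = ker (ι ∘ₗ ε)
    rw [ker_comp, ker_eq_bot.2 hι, Submodule.comap_bot, hδε]
  | .negSucc (n + 2) => hδ n

end Splice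

section GorensteinProjective

variable {A : Type} [Ring A] {G : Type} [AddCommGroup G] [Module A G]

theorem IsGorensteinProjective.hasFGProjCoresolution (hG : IsGorensteinProjective A G) :
    HasFGProjCoresolution A G :=
  let ⟨C, i, ⟨e⟩⟩ := hG
  (C.hasFGProjCoresolution_ker i).of_linearEquiv e

theorem isGorensteinProjective_of_hasFGProjCoresolution [IsNoetherian A A]
    {n : ℕ} (hA : HasInjDimLE A n A) [Module.Finite A G] (hG : HasFGProjCoresolution A G) :
    IsGorensteinProjective A G := by
  obtain ⟨F, hF, hFproj, δ, ε, hε, hδε, hδ⟩ := hasFGProjResolution A G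
  obtain ⟨P, hP, hPproj, d, ι, hι, hιd, hd⟩ := hG
  let C := TotallyAcyclicComplex.ofAcyclic hA (spliceObj F P)
    (fun | .ofNat n => hP n | .negSucc n => hF n)
    (fun | .ofNat n => hPproj n | .negSucc n => hFproj n)
    (spliceHom δ ε ι d) (spliceHom_acyclic δ ε ι d hε hδε hδ hι hιd hd)
  exact ⟨C, 0, ⟨(LinearEquiv.ofInjective ι hι).trans (LinearEquiv.ofEq _ _ hιd)⟩⟩

theorem isGorensteinProjective_iff_hasFGProjCoresolution [IsNoetherian A A] {n : ℕ}
    (hA : HasInjDimLE A n A) [Module.Finite A G] :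
    IsGorensteinProjective A G ↔ HasFGProjCoresolution A G :=
  ⟨IsGorensteinProjective.hasFGProjCoresolution,
    isGorensteinProjective_of_hasFGProjCoresolution hA⟩

end GorensteinProjective

/-- Over an Iwanaga-Gorenstein finite-dimensional algebra `A`, a finitely generated module `G`
is Gorenstein projective if and only if there is an exact sequence
`0 → G → P^0 → P^1 → ⋯` with each `P^i` finitely generated projective. -/
theorem gorensteinProjective_iff_exists_right_resolution
    (K : Type) [Field K] (A : Type) [Ring A] [Algebra K A] [FiniteDimensional K A]
    (hA : IwanagaGorenstein A)
    (G : Type) [AddCommGroup G] [Module A G] [Module.Finite A G] :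
    IsGorensteinProjective A G ↔
      ∃ (P : ℕ → ModuleCat.{0} A) (_ : ∀ n, Module.Finite A (P n))
        (_ : ∀ n, Module.Projective A (P n))
        (d : ∀ n : ℕ, P n ⟶ P (n + 1)) (ι : G →ₗ[A] P 0),
        Function.Injective ι ∧ LinearMap.range ι = LinearMap.ker (d 0).hom ∧
          ∀ n, LinearMap.range (d n).hom = LinearMap.ker (d (n + 1)).hom := by
  obtain ⟨n, hn⟩ := hA.1
  have : IsNoetherian A A := isNoetherian_of_tower K inferInstance
  exact isGorensteinProjective_iff_hasFGProjCoresolution hn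
end

section
/- Let A be an Iwanaga-Gorenstein finite-dimensional algebra and P• an exact sequence of finitely generated projective left A-modules. Then Hom_A(P•, A) is an exact sequence of projective right A-modules. -/
open CategoryTheory

/-! A finitely generated projective `P` is a direct summand of some `Aⁿ`, so `Hom_A(P, A)` is a
direct summand of `Hom_A(Aⁿ, A) ≅ Aⁿ` as a right module. For exactness, a functional killing
`im d i = ker d (i+1)` must factor through `d (i+1)`. More generally, a map `P j → N` killing
`ker d j` factors through `d j` whenever `N` has finite injective dimension, by induction along
`0 → N → I → I ⧸ N → 0` with `I` injective: factor through `d j` into `I`; the error term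
`P (j+1) → I ⧸ N` kills `ker d (j+1)`, so by induction it factors through `d (j+1)`; lift that
factorisation to `I` by projectivity and subtract. -/

instance {R : Type*} [Ring R] : Module.Free Rᵐᵒᵖ R :=
  .of_basis <| .ofEquivFun
    { toFun := fun a _ => MulOpposite.op a
      invFun := fun f => (f ()).unop
      map_add' := fun _ _ => rfl
      map_smul' := fun _ _ => rfl
      left_inv := fun _ => rfl
      right_inv := fun _ => rfl }

instance {R M ι : Type*} [Ring R] [AddCommGroup M] [Module R M] [Finite ι]
    [Module.Projective R M] : Module.Projective R (ι → M) := by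
  classical
  have := Fintype.ofFinite ι
  exact .of_equiv (DFinsupp.linearEquivFunOnFintype (R := R) (M := fun _ : ι => M))

theorem Module.Projective.linearMap_of_finite {A S P M : Type*} [Ring A] [Ring S]
    [AddCommGroup P] [Module A P] [Module.Finite A P] [Module.Projective A P]
    [AddCommGroup M] [Module A M] [Module S M] [SMulCommClass A S M] [Module.Projective S M] :
    Module.Projective S (P →ₗ[A] M) := by
  obtain ⟨n, π, hπ⟩ := Module.Finite.exists_fin' A P
  obtain ⟨σ, hσ⟩ := π.exists_rightInverse_of_surjective (LinearMap.range_eq_top.2 hπ)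
  have : Module.Projective S ((Fin n → A) →ₗ[A] M) :=
    .of_equiv (LinearEquiv.piRing A M (Fin n) S).symm
  refine .of_split (LinearMap.lcompₛₗ S M (RingHom.id A) π)
    (LinearMap.lcompₛₗ S M (RingHom.id A) σ) ?_
  ext g x
  simp [← LinearMap.comp_apply π σ, hσ]

universe u

theorem Module.Injective.exists_comp_eq_of_ker_le_s5 {R : Type*} {M M' I : Type u} [Ring R]
    [AddCommGroup M] [Module R M] [AddCommGroup M'] [Module R M'] [AddCommGroup I] [Module R I]
    [Module.Injective R I] (f : M →ₗ[R] M') (g : M →ₗ[R] I)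
    (h : LinearMap.ker f ≤ LinearMap.ker g) : ∃ ψ : M' →ₗ[R] I, ψ ∘ₗ f = g := by
  obtain ⟨ψ, hψ⟩ := Module.Injective.out ((LinearMap.ker f).liftQ f le_rfl)
    (LinearMap.ker_eq_bot.1 (Submodule.ker_liftQ_eq_bot _ _ _ le_rfl))
    ((LinearMap.ker f).liftQ g h)
  exact ⟨ψ, LinearMap.ext fun x => hψ (Submodule.Quotient.mk x)⟩

theorem LinearMap.exists_comp_eq_of_range_le_s5 {R M N I : Type*} [Ring R]
    [AddCommGroup M] [Module R M] [AddCommGroup N] [Module R N] [AddCommGroup I] [Module R I]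
    (f : N →ₗ[R] I) (hf : Function.Injective f) (ψ : M →ₗ[R] I)
    (h : LinearMap.range ψ ≤ LinearMap.range f) : ∃ φ : M →ₗ[R] N, f ∘ₗ φ = ψ :=
  ⟨(LinearEquiv.ofInjective f hf).symm ∘ₗ ψ.codRestrict _ fun x => h ⟨x, rfl⟩, by
    ext x
    simp⟩

open LinearMap in
theorem exists_comp_eq_of_ker_le_of_hasInjDimLE {A : Type} [Ring A] (P : ℤ → ModuleCat.{0} A)
    (proj : ∀ i, Module.Projective A (P i)) (d : ∀ i : ℤ, P i ⟶ P (i + 1))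
    (acyclic : ∀ i : ℤ, range (d i).hom = ker (d (i + 1)).hom)
    {N : Type} [AddCommGroup N] [Module A N] {n : ℕ} (hN : HasInjDimLE A n N) (j : ℤ)
    (g : (P j : Type) →ₗ[A] N) (hg : ker (d j).hom ≤ ker g) :
    ∃ h : (P (j + 1) : Type) →ₗ[A] N, h ∘ₗ (d j).hom = g := by
  induction n generalizing N j with
  | zero =>
    have : Module.Injective A N := hN
    exact Module.Injective.exists_comp_eq_of_ker_le_s5 _ g hg
  | succ n ih =>
    obtain ⟨I, _, _, _, f, hf, hQ⟩ := hN
    obtain ⟨ψ, hψ⟩ := Module.Injective.exists_comp_eq_of_ker_le_s5 (d j).hom (f ∘ₗ g)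
      (hg.trans (ker_le_ker_comp g f))
    have hψ_ker : ker (d (j + 1)).hom ≤ ker ((range f).mkQ ∘ₗ ψ) := by
      rw [← acyclic j, range_le_ker_iff, comp_assoc, hψ, ← comp_assoc, range_mkQ_comp,
        zero_comp]
    obtain ⟨η, hη⟩ := ih hQ (j + 1) _ hψ_ker
    have := proj (j + 1 + 1)
    obtain ⟨η', hη'⟩ := Module.projective_lifting_property (range f).mkQ η
      (Submodule.mkQ_surjective _)
    have hrange : range (ψ - η' ∘ₗ (d (j + 1)).hom) ≤ range f := by
      rw [← Submodule.ker_mkQ (range f), range_le_ker_iff, comp_sub, ← comp_assoc, hη', hη,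
        sub_self]
    obtain ⟨h, hh⟩ := exists_comp_eq_of_range_le_s5 f hf _ hrange
    refine ⟨h, (cancel_left hf).1 ?_⟩
    rw [← comp_assoc, hh, sub_comp, hψ, comp_assoc, range_le_ker_iff.1 (acyclic j).le, comp_zero,
      sub_zero]

theorem homDual_of_exact_complex_of_projectives_is_exact_of_projectives_general
    (A : Type) [Ring A]
    (hA : IwanagaGorenstein A)
    (P : ℤ → ModuleCat.{0} A) (fg : ∀ i, Module.Finite A (P i))
    (proj : ∀ i, Module.Projective A (P i))
    (d : ∀ i : ℤ, P i ⟶ P (i + 1))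
    (acyclic : ∀ i : ℤ, LinearMap.range (d i).hom = LinearMap.ker (d (i + 1)).hom) :
    (∀ i : ℤ, Module.Projective Aᵐᵒᵖ ((P i : Type) →ₗ[A] A)) ∧
      (∀ (i : ℤ) (g : (P (i + 1) : Type) →ₗ[A] A),
        g.comp (d i).hom = 0 ↔ ∃ h : (P (i + 1 + 1) : Type) →ₗ[A] A, h.comp (d (i + 1)).hom = g) := by
  obtain ⟨⟨n, hn⟩, -⟩ := hA
  refine ⟨fun i => ?_, fun i g => ⟨fun hg => ?_, ?_⟩⟩
  · have := fg i
    have := proj i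
    exact .linearMap_of_finite
  · refine exists_comp_eq_of_ker_le_of_hasInjDimLE P proj d acyclic hn (i + 1) g ?_
    rwa [← acyclic i, LinearMap.range_le_ker_iff]
  · rintro ⟨h, rfl⟩
    rw [LinearMap.comp_assoc, LinearMap.range_le_ker_iff.1 (acyclic i).le, LinearMap.comp_zero]

/-- Let `A` be an Iwanaga-Gorenstein finite-dimensional algebra and `P•` an exact sequence of
finitely generated projective left `A`-modules.  Then `Hom_A(P•, A)` is an exact sequence of
projective right `A`-modules (right modules are modules over `Aᵐᵒᵖ`; the dual complex has
differentials given by precomposition). -/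
theorem homDual_of_exact_complex_of_projectives_is_exact_of_projectives
    (K : Type) [Field K] (A : Type) [Ring A] [Algebra K A] [FiniteDimensional K A]
    (hA : IwanagaGorenstein A)
    (P : ℤ → ModuleCat.{0} A) (fg : ∀ i, Module.Finite A (P i))
    (proj : ∀ i, Module.Projective A (P i))
    (d : ∀ i : ℤ, P i ⟶ P (i + 1))
    (acyclic : ∀ i : ℤ, LinearMap.range (d i).hom = LinearMap.ker (d (i + 1)).hom) :
    (∀ i : ℤ, Module.Projective Aᵐᵒᵖ ((P i : Type) →ₗ[A] A)) ∧
      (∀ (i : ℤ) (g : (P (i + 1) : Type) →ₗ[A] A),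
        g.comp (d i).hom = 0 ↔ ∃ h : (P (i + 1 + 1) : Type) →ₗ[A] A, h.comp (d (i + 1)).hom = g) :=
  homDual_of_exact_complex_of_projectives_is_exact_of_projectives_general A hA P fg proj d acyclic
end
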